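/- arXiv:2002.12770 — 2 statements merged into one kernel-verified Lean document; each statement's English description precedes it below -/
import Mathlib

section
/- For every c ≥ 0 and n̄ > 0, the function E_c(b) := n̄ Σ_{n=1}^{N} ln(1+b_n) + c √(n̄ Σ_{n=1}^{N} (1 − (1+b_n)^{-2})) is concave on [0,∞)^N; that is, for all b, b' ∈ [0,∞)^N and all t ∈ [0,1], E_c(t·b + (1−t)·b') ≥ t·E_c(b) + (1−t)·E_c(b'). -/
/-!
Each coordinate contributes the concave functions `x ↦ log (1 + x)` and `x ↦ 1 - (1 + x)⁻²`
(the latter is `1` minus the convex function `y ↦ y⁻²` translated), so both sums are concave on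
`[0,∞)^N`. The second sum is moreover nonnegative there, and `√` is concave and monotone on
`[0,∞)`, so its square root stays concave. A nonnegative combination of concave functions is
concave.
-/

noncomputable section

def Efun {N : ℕ} (nbar c : ℝ) (b : Fin N → ℝ) : ℝ :=
  nbar * ∑ n, Real.log (1 + b n) +
    c * Real.sqrt (nbar * ∑ n, (1 - ((1 + b n) ^ 2)⁻¹))

open Set Real

section Concave

variable {𝕜 E β ι : Type*} [Semiring 𝕜] [PartialOrder 𝕜] [AddCommMonoid E]
  [AddCommMonoid β] [PartialOrder β] [IsOrderedAddMonoid β] [Module 𝕜 β]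

theorem ConcaveOn.sum [SMul 𝕜 E] {s : Set E} (hs : Convex 𝕜 s) (t : Finset ι)
    {f : ι → E → β} (hf : ∀ i ∈ t, ConcaveOn 𝕜 s (f i)) : ConcaveOn 𝕜 s (∑ i ∈ t, f i) :=
  Finset.sum_induction f (ConcaveOn 𝕜 s) (fun _ _ => ConcaveOn.add) (concaveOn_const 0 hs) hf

theorem ConcaveOn.sum_comp_apply [Module 𝕜 E] [Fintype ι] {s : Set E} {f : E → β}
    (hf : ConcaveOn 𝕜 s f) : ConcaveOn 𝕜 (univ.pi fun _ : ι => s) fun x => ∑ i, f (x i) := by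
  have hpi : Convex 𝕜 (univ.pi fun _ : ι => s) := convex_pi fun _ _ => hf.1
  refine (ConcaveOn.sum hpi Finset.univ fun i _ =>
    (hf.comp_linearMap (LinearMap.proj (R := 𝕜) (φ := fun _ : ι => E) i)).subset
      (fun _ hx => hx i (mem_univ i)) hpi).congr fun x _ => ?_
  simp

end Concave

theorem ConcaveOn.sqrt {E : Type*} [AddCommMonoid E] [Module ℝ E] {s : Set E} {f : E → ℝ}
    (hf : ConcaveOn ℝ s f) (hf₀ : ∀ x ∈ s, 0 ≤ f x) : ConcaveOn ℝ s fun x => √(f x) :=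
  ⟨hf.1, fun x hx y hy _ _ ha hb hab =>
    (strictConcaveOn_sqrt.concaveOn.2 (hf₀ x hx) (hf₀ y hy) ha hb hab).trans
      (sqrt_le_sqrt (hf.2 hx hy ha hb hab))⟩

theorem concaveOn_log_one_add : ConcaveOn ℝ (Ioi (-1)) fun x => log (1 + x) := by
  have := strictConcaveOn_log_Ioi.concaveOn.translate_right (1 : ℝ)
  rwa [preimage_const_add_Ioi, zero_sub] at this

theorem concaveOn_one_sub_inv_one_add_sq :
    ConcaveOn ℝ (Ioi (-1)) fun x : ℝ => 1 - ((1 + x) ^ 2)⁻¹ := by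
  have := ((convexOn_zpow (𝕜 := ℝ) (-2)).neg.add_const (1 : ℝ)).translate_right (1 : ℝ)
  rw [preimage_const_add_Ioi, zero_sub] at this
  refine this.congr fun x _ => ?_
  simp [zpow_neg, sub_eq_neg_add]

theorem one_sub_inv_one_add_sq_nonneg {x : ℝ} (hx : 0 ≤ x) : 0 ≤ 1 - ((1 + x) ^ 2)⁻¹ :=
  sub_nonneg.2 (inv_le_one_of_one_le₀ (one_le_pow₀ (le_add_of_nonneg_right hx)))

theorem concaveOn_Efun {N : ℕ} {nbar c : ℝ} (hnbar : 0 ≤ nbar) (hc : 0 ≤ c) :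
    ConcaveOn ℝ (univ.pi fun _ : Fin N => Ici 0) (Efun nbar c) := by
  have hsub : (univ.pi fun _ : Fin N => Ici (0 : ℝ)) ⊆ univ.pi fun _ => Ioi (-1) :=
    pi_mono fun _ _ x (hx : 0 ≤ x) => show -1 < x by linarith
  have hpi : Convex ℝ (univ.pi fun _ : Fin N => Ici (0 : ℝ)) := convex_pi fun _ _ => convex_Ici 0
  have hlog := (concaveOn_log_one_add.sum_comp_apply.subset hsub hpi).smul hnbar
  have hsum := (concaveOn_one_sub_inv_one_add_sq.sum_comp_apply.subset hsub hpi).smul hnbar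
  have hsqrt := (hsum.sqrt fun b hb => mul_nonneg hnbar <| Finset.sum_nonneg fun n _ =>
    one_sub_inv_one_add_sq_nonneg (hb n (mem_univ n))).smul hc
  exact hlog.add hsqrt

/-- For every `c ≥ 0` and `n̄ > 0`, `E_c` is concave on `[0,∞)^N`:
for all `b, b' ∈ [0,∞)^N` and `t ∈ [0,1]`,
`E_c(t·b + (1−t)·b') ≥ t·E_c(b) + (1−t)·E_c(b')`. -/
theorem Efun_concave_on_nonneg
    {N : ℕ} (nbar c : ℝ) (hnbar : 0 < nbar) (hc : 0 ≤ c)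
    (b b' : Fin N → ℝ) (hb : ∀ n, 0 ≤ b n) (hb' : ∀ n, 0 ≤ b' n)
    (t : ℝ) (ht0 : 0 ≤ t) (ht1 : t ≤ 1) :
    t * Efun nbar c b + (1 - t) * Efun nbar c b' ≤
      Efun nbar c (fun n => t * b n + (1 - t) * b' n) :=
  (concaveOn_Efun hnbar.le hc).2 (fun n _ => hb n) (fun n _ => hb' n) ht0 (sub_nonneg.2 ht1)
    (add_sub_cancel t 1)

end
end

section
/- Let n̄ > 0 and let a⁰ ∈ [0,∞)^N satisfy Σ_{n=1}^{N} (1 − (1+a⁰_n)^{-2}) > 0. Then for every a ∈ [0,∞)^N, the function Ψ(a) := √(n̄ Σ_{n=1}^{N} (1 − (1+a_n)^{-2})) satisfies the tangent-overestimation inequality Ψ(a) ≤ Ψ(a⁰) + Σ_{m=1}^{N} [ n̄·(1+a⁰_m)^{-3} / Ψ(a⁰) ] · (a_m − a⁰_m). Consequently, for any reals R, τ, B: if R − (the right-hand-side linearization evaluated at a) − τ ≥ B, then R − Ψ(a) − τ ≥ B. -/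
noncomputable section

/-- `Ψ(a) = √(n̄ Σ_n (1 − (1+a_n)⁻²))`, the dispersion penalty term appearing in the
finite-blocklength secrecy rate. -/
def Psi {N : ℕ} (nbar : ℝ) (a : Fin N → ℝ) : ℝ :=
  Real.sqrt (nbar * ∑ n, (1 - ((1 + a n) ^ 2)⁻¹))

/-!
Both `√` and each summand `x ↦ 1 - (1 + x)⁻²` are concave, and `√` is monotone, so `Ψ`
lies below its tangent plane at `a⁰`. With `S(a) = Σₙ (1 - (1 + aₙ)⁻²)`, the tangent line of `√` at `s > 0`
bounds `Ψ(a)` by `Ψ(a⁰) + n̄ (S(a) - S(a⁰)) / (2 Ψ(a⁰))`, and summing the tangent lines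
of the summands bounds `S(a) - S(a⁰)` by `Σ 2 (1 + a⁰ₘ)⁻³ (aₘ - a⁰ₘ)`.
-/

def dispersion {N : ℕ} (a : Fin N → ℝ) : ℝ :=
  ∑ n, (1 - ((1 + a n) ^ 2)⁻¹)

lemma Psi_eq_sqrt_dispersion {N : ℕ} (nbar : ℝ) (a : Fin N → ℝ) :
    Psi nbar a = Real.sqrt (nbar * dispersion a) :=
  rfl

lemma sqrt_le_tangent {t s : ℝ} (ht : 0 ≤ t) (hs : 0 < s) :
    Real.sqrt t ≤ Real.sqrt s + (t - s) / (2 * Real.sqrt s) := by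
  have hss : 0 < Real.sqrt s := Real.sqrt_pos.2 hs
  have amgm : 2 * Real.sqrt t * Real.sqrt s ≤ t + s := by
    simpa [Real.sq_sqrt ht, Real.sq_sqrt hs.le] using two_mul_le_add_sq (Real.sqrt t) (Real.sqrt s)
  rw [← sub_le_iff_le_add', le_div_iff₀ (by positivity)]
  nlinarith [Real.mul_self_sqrt hs.le]

lemma inv_sq_tangent_le {u v : ℝ} (hu : 0 < u) (hv : 0 < v) :
    (v ^ 2)⁻¹ - 2 * (v ^ 3)⁻¹ * (u - v) ≤ (u ^ 2)⁻¹ := by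
  rw [← sub_nonneg]
  have expand : (u ^ 2)⁻¹ - ((v ^ 2)⁻¹ - 2 * (v ^ 3)⁻¹ * (u - v))
      = (v - u) ^ 2 * (v + 2 * u) / (u ^ 2 * v ^ 3) := by
    field_simp
    ring
  rw [expand]
  positivity

lemma dispersion_nonneg {N : ℕ} {a : Fin N → ℝ} (ha : ∀ n, 0 ≤ a n) : 0 ≤ dispersion a :=
  Finset.sum_nonneg fun n _ =>
    sub_nonneg.2 (inv_le_one_of_one_le₀ (one_le_pow₀ (le_add_of_nonneg_right (ha n))))

lemma dispersion_le_tangent {N : ℕ} {a a0 : Fin N → ℝ}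
    (ha : ∀ n, 0 < 1 + a n) (ha0 : ∀ n, 0 < 1 + a0 n) :
    dispersion a ≤ dispersion a0 + ∑ m, 2 * ((1 + a0 m) ^ 3)⁻¹ * (a m - a0 m) := by
  rw [dispersion, dispersion, ← Finset.sum_add_distrib]
  refine Finset.sum_le_sum fun m _ => ?_
  have := inv_sq_tangent_le (ha m) (ha0 m)
  rw [add_sub_add_left_eq_sub] at this
  linarith

lemma Psi_le_tangent {N : ℕ} {nbar : ℝ} (hnbar : 0 < nbar) {a a0 : Fin N → ℝ}
    (ha : ∀ n, 0 ≤ a n) (ha0 : ∀ n, 0 ≤ a0 n) (hpos : 0 < dispersion a0) :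
    Psi nbar a ≤ Psi nbar a0 +
      ∑ m, (nbar * ((1 + a0 m) ^ 3)⁻¹ / Psi nbar a0) * (a m - a0 m) := by
  have hΨ0 : 0 < Psi nbar a0 := Real.sqrt_pos.2 (mul_pos hnbar hpos)
  have hsqrt := sqrt_le_tangent (mul_nonneg hnbar.le (dispersion_nonneg ha)) (mul_pos hnbar hpos)
  have hdisp : dispersion a ≤ dispersion a0 + ∑ m, 2 * ((1 + a0 m) ^ 3)⁻¹ * (a m - a0 m) :=
    dispersion_le_tangent (fun n => by linarith [ha n]) (fun n => by linarith [ha0 n])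
  have hlin : ∑ m, (nbar * ((1 + a0 m) ^ 3)⁻¹ / Psi nbar a0) * (a m - a0 m)
      = nbar / (2 * Psi nbar a0) * ∑ m, 2 * ((1 + a0 m) ^ 3)⁻¹ * (a m - a0 m) := by
    rw [Finset.mul_sum]
    refine Finset.sum_congr rfl fun m _ => ?_
    field_simp
  rw [← Psi_eq_sqrt_dispersion, ← Psi_eq_sqrt_dispersion] at hsqrt
  calc Psi nbar a
      ≤ Psi nbar a0 + nbar / (2 * Psi nbar a0) * (dispersion a - dispersion a0) := by
        convert hsqrt using 2; ring
    _ ≤ _ := by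
        rw [hlin]
        gcongr
        linarith

/-- The first-order Taylor expansion of `Ψ` at a point `a⁰ ∈ [0,∞)^N`
with strictly positive dispersion sum is a global overestimator of `Ψ` on `[0,∞)^N`;
consequently, replacing `Ψ(a)` by its linearization in the constraint
`R − Ψ(a) − τ ≥ B` yields a sufficient condition. The coefficients are the partial
derivatives `∂Ψ/∂a_m` at `a⁰`. -/
theorem Psi_taylor_overestimates
    {N : ℕ} (nbar : ℝ) (hnbar : 0 < nbar)
    (a0 : Fin N → ℝ) (ha0 : ∀ n, 0 ≤ a0 n)
    (hpos : 0 < ∑ n, (1 - ((1 + a0 n) ^ 2)⁻¹)) :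
    ∀ a : Fin N → ℝ, (∀ n, 0 ≤ a n) →
      (Psi nbar a ≤ Psi nbar a0 +
        ∑ m, (nbar * ((1 + a0 m) ^ 3)⁻¹ / Psi nbar a0) * (a m - a0 m)) ∧
      (∀ R τ B : ℝ,
        B ≤ R - (Psi nbar a0 +
            ∑ m, (nbar * ((1 + a0 m) ^ 3)⁻¹ / Psi nbar a0) * (a m - a0 m)) - τ →
        B ≤ R - Psi nbar a - τ) := by
  intro a ha
  have htangent := Psi_le_tangent hnbar ha ha0 hpos
  exact ⟨htangent, fun R τ B h => by linarith⟩

end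
end
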